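/- Let k, L ≥ 2, let t be a bias partition with L = 2ℓ+1 classes and p a rounding vector, and suppose the oblivious algorithm satisfies α(Obl_k^{t,p}) ≥ α. Let Ψ be any Max-kAND instance and suppose M̂ ∈ ℝ^{Ptn_k^L} satisfies ‖Snap_Ψ^t − M̂‖_1 := Σ_{c ∈ Ptn_k^L} |Snap_Ψ^t(c) − M̂(c)| ≤ ε. Then (α − 2^{k+1}ε)·val_Ψ ≤ Σ_{c ∈ Ptn_k^L} prob^p(c)·M̂(c) − ε ≤ val_Ψ. -/

import Mathlib

open scoped BigOperators
open Classical

/-- An instance of Max-kAND on `n` Boolean variables. -/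
structure KAndInstance (k n : ℕ) where
  m : ℕ
  pos : Fin m → Finset (Fin n)
  neg : Fin m → Finset (Fin n)
  w : Fin m → ℝ
  disj : ∀ j, Disjoint (pos j) (neg j)
  arity : ∀ j, (pos j ∪ neg j).card = k
  w_nonneg : ∀ j, 0 ≤ w j
  w_total : 0 < ∑ j, w j
  cover : ∀ v : Fin n, ∃ j, 0 < w j ∧ (v ∈ pos j ∨ v ∈ neg j)

namespace KAndInstance
variable {k n : ℕ} (Ψ : KAndInstance k n)

/-- A clause is satisfied by a ±1 assignment (encoded as `Bool`, `true` = +1). -/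
def sat (x : Fin n → Bool) (j : Fin Ψ.m) : Prop :=
  (∀ v ∈ Ψ.pos j, x v = true) ∧ (∀ v ∈ Ψ.neg j, x v = false)

/-- The (fractional) value of an assignment. -/
noncomputable def val (x : Fin n → Bool) : ℝ :=
  (∑ j, if Ψ.sat x j then Ψ.w j else 0) / (∑ j, Ψ.w j)

/-- The value of the instance: the maximum value over assignments. -/
noncomputable def optVal : ℝ := ⨆ x : Fin n → Bool, Ψ.val x

/-- Total weight of clauses containing `v` positively. -/
noncomputable def wpos (v : Fin n) : ℝ := ∑ j, if v ∈ Ψ.pos j then Ψ.w j else 0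

/-- Total weight of clauses containing `v` negatively. -/
noncomputable def wneg (v : Fin n) : ℝ := ∑ j, if v ∈ Ψ.neg j then Ψ.w j else 0

/-- The bias of a variable. -/
noncomputable def bias (v : Fin n) : ℝ := (Ψ.wpos v - Ψ.wneg v) / (Ψ.wpos v + Ψ.wneg v)

end KAndInstance

/-- A symmetric partition of `[-1,1]` into `2ℓ+1` bias classes, given by
`0 ≤ t 0 < t 1 < ⋯ < t ℓ = 1` (values of `t` beyond index `ℓ` are irrelevant). -/
structure BiasPartition (ℓ : ℕ) where
  t : ℕ → ℝ
  t0_nonneg : 0 ≤ t 0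
  mono : ∀ i, i < ℓ → t i < t (i + 1)
  t_top : t ℓ = 1

namespace BiasPartition
variable {ℓ : ℕ} (T : BiasPartition ℓ)

/-- Raw index (in `{0,…,2ℓ}`, with `ℓ` = bias class `0`, `ℓ+i` = class `+i`,
`ℓ-i` = class `-i`) of the bias class containing a bias value `b`. -/
noncomputable def classIdx (b : ℝ) : ℕ :=
  if |b| ≤ T.t 0 then ℓ
  else if 0 < b then ℓ + sInf {i : ℕ | b ≤ T.t i}
  else ℓ - sInf {i : ℕ | -b ≤ T.t i}

end BiasPartition

/-- Extends a rounding vector `p = (p 1, …, p ℓ)` to a function on raw class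
indices: the probability of assigning `+1` to a variable in raw class `r`. -/
noncomputable def pExt (ℓ : ℕ) (p : ℕ → ℝ) (r : ℕ) : ℝ :=
  if r = ℓ then 1/2 else if ℓ < r then p (r - ℓ) else 1 - p (ℓ - r)

/-- The probability with which the oblivious algorithm rounds a variable of
bias `b` to `+1`. -/
noncomputable def roundProb {ℓ : ℕ} (T : BiasPartition ℓ) (p : ℕ → ℝ) (b : ℝ) : ℝ :=
  pExt ℓ p (T.classIdx b)

/-- `Obl_k^{t,p}(Ψ)`: the expected value of the random assignment produced by the
oblivious algorithm, which independently rounds each variable to `+1` with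
probability `roundProb T p (bias v)`. -/
noncomputable def oblValue {k n ℓ : ℕ} (T : BiasPartition ℓ) (p : ℕ → ℝ)
    (Ψ : KAndInstance k n) : ℝ :=
  ∑ x : Fin n → Bool,
    (∏ v, if x v then roundProb T p (Ψ.bias v) else 1 - roundProb T p (Ψ.bias v)) * Ψ.val x

/-- `α(Obl_k^{t,p})`: the approximation ratio of the oblivious algorithm, i.e. the
infimum over all instances `Ψ` of `Obl_k^{t,p}(Ψ) / val_Ψ`. -/
noncomputable def oblRatio (k ℓ : ℕ) (T : BiasPartition ℓ) (p : ℕ → ℝ) : ℝ :=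
  sInf { r : ℝ | ∃ (n : ℕ) (Ψ : KAndInstance k n), r = oblValue T p Ψ / Ψ.optVal }

/-- `γ_k`. -/
noncomputable def gammaStar (k : ℕ) : ℝ := if Odd k then 1/k else 1/(k+1)

/-- `p*_k = (1+γ_k)/2`. -/
noncomputable def pStar (k : ℕ) : ℝ := (1 + gammaStar k)/2

/-- `α*_k = 2 (p*_k (1-p*_k))^⌊k/2⌋`. -/
noncomputable def alphaStar (k : ℕ) : ℝ := 2 * (pStar k * (1 - pStar k))^(k/2)

/-- The number of positive variables of clause `j` whose bias class has raw
index `r` (this is `c_i^+` of the pattern `ptn^t(C_j)`, for `r = ℓ + i`). -/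
noncomputable def clausePtnPos {k n ℓ : ℕ} (T : BiasPartition ℓ) (Ψ : KAndInstance k n)
    (j : Fin Ψ.m) (r : ℕ) : ℕ :=
  ((Ψ.pos j).filter (fun v => T.classIdx (Ψ.bias v) = r)).card

/-- The number of negative variables of clause `j` whose bias class has raw
index `r` (this is `c_i^-` of the pattern `ptn^t(C_j)`, for `r = ℓ + i`). -/
noncomputable def clausePtnNeg {k n ℓ : ℕ} (T : BiasPartition ℓ) (Ψ : KAndInstance k n)
    (j : Fin Ψ.m) (r : ℕ) : ℕ :=
  ((Ψ.neg j).filter (fun v => T.classIdx (Ψ.bias v) = r)).card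

/-- `prob^p(c)` for a pattern given by raw class-indexed count functions
`cp cm : ℕ → ℕ` (raw index `ℓ` is bias class `0`, `ℓ+i` is class `+i`, and
`ℓ-i` is class `-i`): this is
`2^{-(c₀⁺+c₀⁻)} ∏_{i=1}^ℓ p_i^{c_{+i}⁺+c_{-i}⁻} (1-p_i)^{c_{+i}⁻+c_{-i}⁺}`,
with the convention `0^0 = 1`. -/
noncomputable def patProbRaw (ℓ : ℕ) (p : ℕ → ℝ) (cp cm : ℕ → ℕ) : ℝ :=
  (1/2 : ℝ) ^ (cp ℓ + cm ℓ) *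
    ∏ i ∈ Finset.Icc 1 ℓ, (p i) ^ (cp (ℓ + i) + cm (ℓ - i)) * (1 - p i) ^ (cm (ℓ + i) + cp (ℓ - i))

/-- A clause pattern in `Ptn_k^L` (`L = 2ℓ+1`): a tuple of counts
`(c_i^+, c_i^-)` for each bias class `i ∈ {-ℓ,…,+ℓ}`, all natural numbers,
summing to `k`.  The raw index `r : Fin (2ℓ+1)` encodes the bias class `r - ℓ`
(so raw index `ℓ` is class `0`, `ℓ+i` is class `+i`, and `ℓ-i` is class `-i`). -/
def Ptn (k ℓ : ℕ) :=
  { c : Fin (2*ℓ+1) → Fin (k+1) × Fin (k+1) //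
    ∑ i, (((c i).1 : ℕ) + ((c i).2 : ℕ)) = k }

noncomputable instance (k ℓ : ℕ) : Fintype (Ptn k ℓ) := by
  unfold Ptn; infer_instance

namespace Ptn

/-- `c_i^+` read off at raw class index `r` (zero out of range). -/
def cp {k ℓ : ℕ} (c : Ptn k ℓ) (r : ℕ) : ℕ :=
  if h : r < 2*ℓ+1 then ((c.1 ⟨r, h⟩).1 : ℕ) else 0

/-- `c_i^-` read off at raw class index `r` (zero out of range). -/
def cm {k ℓ : ℕ} (c : Ptn k ℓ) (r : ℕ) : ℕ :=
  if h : r < 2*ℓ+1 then ((c.1 ⟨r, h⟩).2 : ℕ) else 0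

/-- Membership in `PosPtn_k^L`: a pattern with no negated literals. -/
def IsPos {k ℓ : ℕ} (c : Ptn k ℓ) : Prop := ∀ i, ((c.1 i).2 : ℕ) = 0

end Ptn

/-- `prob^p(c)` for a pattern `c ∈ Ptn_k^L`, with the convention `0^0 = 1`:
`2^{-(c₀⁺+c₀⁻)} ∏_{i=1}^ℓ p_i^{c_{+i}⁺+c_{-i}⁻} (1-p_i)^{c_{+i}⁻+c_{-i}⁺}`. -/
noncomputable def patProb {k ℓ : ℕ} (p : ℕ → ℝ) (c : Ptn k ℓ) : ℝ :=
  (1/2 : ℝ) ^ (c.cp ℓ + c.cm ℓ) *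
    ∏ i ∈ Finset.Icc 1 ℓ,
      (p i) ^ (c.cp (ℓ + i) + c.cm (ℓ - i)) * (1 - p i) ^ (c.cm (ℓ + i) + c.cp (ℓ - i))

/-- `t_i^- = inf Int_i`, read off at raw class index `r` (class `i = r - ℓ`). -/
noncomputable def tLo {ℓ : ℕ} (T : BiasPartition ℓ) (r : ℕ) : ℝ :=
  if r = ℓ then -T.t 0 else if ℓ < r then T.t (r - ℓ - 1) else -T.t (ℓ - r)

/-- `t_i^+ = sup Int_i`, read off at raw class index `r` (class `i = r - ℓ`). -/
noncomputable def tHi {ℓ : ℕ} (T : BiasPartition ℓ) (r : ℕ) : ℝ :=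
  if r = ℓ then T.t 0 else if ℓ < r then T.t (r - ℓ) else -T.t (ℓ - r - 1)

/-- `W⁺(i) = ∑_c c_i^+ W(c)`, at raw class index `r`. -/
noncomputable def Wp {k ℓ : ℕ} (W : Ptn k ℓ → ℝ) (r : ℕ) : ℝ :=
  ∑ c : Ptn k ℓ, (c.cp r : ℝ) * W c

/-- `W⁻(i) = ∑_c c_i^- W(c)`, at raw class index `r`. -/
noncomputable def Wm {k ℓ : ℕ} (W : Ptn k ℓ → ℝ) (r : ℕ) : ℝ :=
  ∑ c : Ptn k ℓ, (c.cm r : ℝ) * W c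

/-- The snapshot array `Snap_Ψ^t(c)`: the fraction of the total weight carried
by clauses whose pattern is `c`.  (A clause has pattern `c` iff its raw
class-indexed counts agree with those of `c` everywhere.) -/
noncomputable def snap {k n ℓ : ℕ} (T : BiasPartition ℓ) (Ψ : KAndInstance k n)
    (c : Ptn k ℓ) : ℝ :=
  (∑ j, if (∀ r, clausePtnPos T Ψ j r = c.cp r ∧ clausePtnNeg T Ψ j r = c.cm r)
      then Ψ.w j else 0) / (∑ j, Ψ.w j)

/-! Rounding each variable independently, clause `j` is satisfied with probability
`prob^p(ptn^t(C_j))`, so `Obl(Ψ) = ∑_c prob^p(c) Snap(c)`; as `0 ≤ prob^p(c) ≤ 1`, this is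
within `ε` of `∑_c prob^p(c) M̂(c)`. The upper bound is then `Obl(Ψ) ≤ val_Ψ`. For the lower bound,
`α val_Ψ ≤ Obl(Ψ)`, and the additive error `2ε` is at most `2^{k+1} ε val_Ψ` because a uniformly
random assignment shows `val_Ψ ≥ 2^{-k}`. -/

open Finset

section ProdBernoulli

variable {ι : Type*} [Fintype ι]

noncomputable def prodBernoulli (q : ι → ℝ) (x : ι → Bool) : ℝ :=
  ∏ v, if x v then q v else 1 - q v

lemma sum_prodBernoulli_piFinset [DecidableEq ι] (q : ι → ℝ) (t : ι → Finset Bool) :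
    ∑ x ∈ Fintype.piFinset t, prodBernoulli q x
      = ∏ v, ∑ b ∈ t v, if b then q v else 1 - q v :=
  (prod_univ_sum t fun v b => if b then q v else 1 - q v).symm

lemma sum_prodBernoulli [DecidableEq ι] (q : ι → ℝ) : ∑ x, prodBernoulli q x = 1 := by
  simpa only [Fintype.piFinset_univ, Fintype.sum_bool, Bool.false_eq_true, if_true, if_false,
    add_sub_cancel, prod_const_one] using sum_prodBernoulli_piFinset q fun _ => univ

lemma prodBernoulli_nonneg {q : ι → ℝ} (hq : ∀ v, q v ∈ Set.Icc 0 1) (x : ι → Bool) :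
    0 ≤ prodBernoulli q x :=
  prod_nonneg fun v _ => by
    have := hq v
    split_ifs <;> simp_all [Set.mem_Icc]

lemma sum_prodBernoulli_mul_le [DecidableEq ι] {q : ι → ℝ} (hq : ∀ v, q v ∈ Set.Icc 0 1)
    {f : (ι → Bool) → ℝ} {M : ℝ} (hf : ∀ x, f x ≤ M) :
    ∑ x, prodBernoulli q x * f x ≤ M :=
  calc ∑ x, prodBernoulli q x * f x ≤ ∑ x, prodBernoulli q x * M :=
        sum_le_sum fun x _ => mul_le_mul_of_nonneg_left (hf x) (prodBernoulli_nonneg hq x)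
    _ = M := by rw [← sum_mul, sum_prodBernoulli, one_mul]

end ProdBernoulli

lemma prod_range_two_mul_add_one {M : Type*} [CommMonoid M] (ℓ : ℕ) (F : ℕ → M) :
    ∏ r ∈ range (2 * ℓ + 1), F r = F ℓ * ∏ i ∈ Icc 1 ℓ, F (ℓ + i) * F (ℓ - i) := by
  have hup : ∏ i ∈ Icc 1 ℓ, F (ℓ + i) = ∏ i ∈ range ℓ, F (ℓ + 1 + i) := by
    rw [← Ico_add_one_right_eq_Icc, prod_Ico_eq_prod_range]
    exact prod_congr (by simp) fun i _ => by congr 1; omega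
  have hdown : ∏ i ∈ Icc 1 ℓ, F (ℓ - i) = ∏ r ∈ range ℓ, F r := by
    rw [← prod_range_reflect F ℓ, ← Ico_add_one_right_eq_Icc, prod_Ico_eq_prod_range]
    exact prod_congr (by simp) fun i _ => by congr 1; omega
  rw [prod_mul_distrib, hup, hdown, show 2 * ℓ + 1 = ℓ + 1 + ℓ by omega, prod_range_add,
    prod_range_succ]
  ac_rfl

lemma abs_sum_mul_sub_sum_mul_le {ι : Type*} (s : Finset ι) {a x y : ι → ℝ}
    (ha : ∀ i ∈ s, a i ∈ Set.Icc (0 : ℝ) 1) :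
    |∑ i ∈ s, a i * x i - ∑ i ∈ s, a i * y i| ≤ ∑ i ∈ s, |x i - y i| := by
  rw [← sum_sub_distrib]
  refine (abs_sum_le_sum_abs _ _).trans (sum_le_sum fun i hi => ?_)
  obtain ⟨h0, h1⟩ := ha i hi
  rw [← mul_sub, abs_mul, abs_of_nonneg h0]
  exact mul_le_of_le_one_left (abs_nonneg _) h1

namespace KAndInstance

variable {k n : ℕ} (Ψ : KAndInstance k n)

/-- The satisfying assignments of clause `j` form the box `Fintype.piFinset (Ψ.satValues j)`,
so their total probability factors over the variables. -/
def satValues (j : Fin Ψ.m) (v : Fin n) : Finset Bool :=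
  if v ∈ Ψ.pos j then {true} else if v ∈ Ψ.neg j then {false} else univ

lemma sat_iff_mem_piFinset {x : Fin n → Bool} {j : Fin Ψ.m} :
    Ψ.sat x j ↔ x ∈ Fintype.piFinset (Ψ.satValues j) := by
  rw [Fintype.mem_piFinset]
  constructor
  · rintro ⟨hpos, hneg⟩ v
    unfold satValues
    split_ifs with h1 h2 <;> simp [hpos v, hneg v, *]
  · intro h
    refine ⟨fun v hv => by simpa [satValues, hv] using h v, fun v hv => ?_⟩
    simpa [satValues, hv, disjoint_right.mp (Ψ.disj j) hv] using h v

lemma sum_prodBernoulli_sat (q : Fin n → ℝ) (j : Fin Ψ.m) :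
    ∑ x with Ψ.sat x j, prodBernoulli q x
      = (∏ v ∈ Ψ.pos j, q v) * ∏ v ∈ Ψ.neg j, (1 - q v) := by
  have hsat : ({x | Ψ.sat x j} : Finset _) = Fintype.piFinset (Ψ.satValues j) := by
    ext x
    simp [sat_iff_mem_piFinset]
  rw [hsat, sum_prodBernoulli_piFinset, ← Fintype.prod_ite_mem (Ψ.pos j),
    ← Fintype.prod_ite_mem (Ψ.neg j), ← prod_mul_distrib]
  refine prod_congr rfl fun v _ => ?_
  unfold satValues
  split_ifs with h1 h2 h3 <;> simp_all [disjoint_left.mp (Ψ.disj j)]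

lemma sum_prodBernoulli_mul_val (q : Fin n → ℝ) :
    ∑ x, prodBernoulli q x * Ψ.val x
      = (∑ j, Ψ.w j * ((∏ v ∈ Ψ.pos j, q v) * ∏ v ∈ Ψ.neg j, (1 - q v))) / ∑ j, Ψ.w j := by
  simp only [val, ← mul_div_assoc, ← sum_div, mul_sum]
  rw [sum_comm]
  congr 1
  refine sum_congr rfl fun j _ => ?_
  rw [← Ψ.sum_prodBernoulli_sat, sum_filter, mul_sum]
  exact sum_congr rfl fun x _ => by split_ifs <;> simp [mul_comm]

lemma val_nonneg (x : Fin n → Bool) : 0 ≤ Ψ.val x :=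
  div_nonneg (sum_nonneg fun j _ => by split_ifs <;> simp [Ψ.w_nonneg j]) Ψ.w_total.le

lemma val_le_optVal (x : Fin n → Bool) : Ψ.val x ≤ Ψ.optVal :=
  le_ciSup (Set.finite_range _).bddAbove x

lemma half_pow_le_optVal : (1 / 2 : ℝ) ^ k ≤ Ψ.optVal := by
  have hclause (j : Fin Ψ.m) :
      (∏ v ∈ Ψ.pos j, (1 / 2 : ℝ)) * ∏ v ∈ Ψ.neg j, (1 - 1 / 2 : ℝ) = (1 / 2) ^ k := by
    rw [prod_const, prod_const, show (1 - 1 / 2 : ℝ) = 1 / 2 by norm_num, ← pow_add,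
      ← card_union_of_disjoint (Ψ.disj j), Ψ.arity j]
  have hval := Ψ.sum_prodBernoulli_mul_val fun _ => 1 / 2
  simp only [hclause, ← sum_mul, mul_div_cancel_left₀ _ Ψ.w_total.ne'] at hval
  rw [← hval]
  have hq : ∀ v : Fin n, (1 / 2 : ℝ) ∈ Set.Icc 0 1 := fun _ => by norm_num
  exact sum_prodBernoulli_mul_le hq Ψ.val_le_optVal

lemma optVal_pos : 0 < Ψ.optVal := lt_of_lt_of_le (by positivity) Ψ.half_pow_le_optVal

lemma abs_bias_le_one (v : Fin n) : |Ψ.bias v| ≤ 1 := by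
  have hpos : 0 ≤ Ψ.wpos v := sum_nonneg fun j _ => by split_ifs <;> simp [Ψ.w_nonneg j]
  have hneg : 0 ≤ Ψ.wneg v := sum_nonneg fun j _ => by split_ifs <;> simp [Ψ.w_nonneg j]
  have hsum : 0 ≤ Ψ.wpos v + Ψ.wneg v := add_nonneg hpos hneg
  rw [bias, abs_div, abs_of_nonneg hsum]
  exact div_le_one_of_le₀ (abs_le.mpr ⟨by linarith, by linarith⟩) hsum

end KAndInstance

lemma BiasPartition.classIdx_le {ℓ : ℕ} (T : BiasPartition ℓ) {b : ℝ} (hb : |b| ≤ 1) :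
    T.classIdx b ≤ 2 * ℓ := by
  have hmem : ℓ ∈ {i : ℕ | b ≤ T.t i} := by
    simpa [T.t_top] using (le_abs_self b).trans hb
  have := Nat.sInf_le hmem
  unfold BiasPartition.classIdx
  split_ifs <;> omega

lemma pExt_mem_Icc {ℓ : ℕ} {p : ℕ → ℝ} (hp : ∀ i, 1 ≤ i → i ≤ ℓ → p i ∈ Set.Icc (0 : ℝ) 1)
    {r : ℕ} (hr : r ≤ 2 * ℓ) : pExt ℓ p r ∈ Set.Icc (0 : ℝ) 1 := by
  unfold pExt
  split_ifs
  · norm_num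
  · exact hp _ (by omega) (by omega)
  · obtain ⟨h0, h1⟩ := hp (ℓ - r) (by omega) (by omega)
    constructor <;> linarith

section ClausePattern

variable {k n ℓ : ℕ} (T : BiasPartition ℓ) (Ψ : KAndInstance k n)

lemma classIdx_bias_lt (v : Fin n) : T.classIdx (Ψ.bias v) < 2 * ℓ + 1 :=
  Nat.lt_succ_of_le (T.classIdx_le (Ψ.abs_bias_le_one v))

lemma sum_card_filter_classIdx_bias (s : Finset (Fin n)) :
    ∑ i : Fin (2 * ℓ + 1), (s.filter fun v => T.classIdx (Ψ.bias v) = i).card = s.card := by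
  rw [card_eq_sum_card_fiberwise (t := univ)
    (f := fun v => (⟨T.classIdx (Ψ.bias v), classIdx_bias_lt T Ψ v⟩ : Fin (2 * ℓ + 1)))
    fun v _ => mem_coe.2 (mem_univ _)]
  exact sum_congr rfl fun i _ => by simp [Fin.ext_iff]

lemma card_filter_classIdx_bias_eq_zero (s : Finset (Fin n)) {r : ℕ} (hr : 2 * ℓ + 1 ≤ r) :
    (s.filter fun v => T.classIdx (Ψ.bias v) = r).card = 0 := by
  rw [card_eq_zero, filter_eq_empty_iff]
  intro v _
  have := classIdx_bias_lt T Ψ v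
  omega

lemma prod_comp_classIdx_bias (s : Finset (Fin n)) (f : ℕ → ℝ) :
    ∏ v ∈ s, f (T.classIdx (Ψ.bias v))
      = ∏ r ∈ range (2 * ℓ + 1), f r ^ (s.filter fun v => T.classIdx (Ψ.bias v) = r).card := by
  rw [← prod_fiberwise_of_maps_to fun v _ => mem_range.2 (classIdx_bias_lt T Ψ v)]
  refine prod_congr rfl fun r _ => ?_
  rw [← prod_const]
  exact prod_congr rfl fun v hv => by rw [(mem_filter.1 hv).2]

lemma clausePtnPos_le (j : Fin Ψ.m) (r : ℕ) : clausePtnPos T Ψ j r ≤ k :=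
  calc clausePtnPos T Ψ j r ≤ (Ψ.pos j).card := card_filter_le _ _
    _ ≤ (Ψ.pos j ∪ Ψ.neg j).card := card_le_card subset_union_left
    _ = k := Ψ.arity j

lemma clausePtnNeg_le (j : Fin Ψ.m) (r : ℕ) : clausePtnNeg T Ψ j r ≤ k :=
  calc clausePtnNeg T Ψ j r ≤ (Ψ.neg j).card := card_filter_le _ _
    _ ≤ (Ψ.pos j ∪ Ψ.neg j).card := card_le_card subset_union_right
    _ = k := Ψ.arity j

noncomputable def clausePtn (j : Fin Ψ.m) : Ptn k ℓ :=
  ⟨fun i => (⟨clausePtnPos T Ψ j i, Nat.lt_succ_of_le (clausePtnPos_le T Ψ j i)⟩,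
      ⟨clausePtnNeg T Ψ j i, Nat.lt_succ_of_le (clausePtnNeg_le T Ψ j i)⟩), by
    simp only [sum_add_distrib, clausePtnPos, clausePtnNeg, sum_card_filter_classIdx_bias,
      ← card_union_of_disjoint (Ψ.disj j), Ψ.arity j]⟩

lemma clausePtn_cp (j : Fin Ψ.m) (r : ℕ) : (clausePtn T Ψ j).cp r = clausePtnPos T Ψ j r := by
  unfold Ptn.cp
  split_ifs with hr
  · rfl
  · exact (card_filter_classIdx_bias_eq_zero T Ψ _ (not_lt.1 hr)).symm

lemma clausePtn_cm (j : Fin Ψ.m) (r : ℕ) : (clausePtn T Ψ j).cm r = clausePtnNeg T Ψ j r := by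
  unfold Ptn.cm
  split_ifs with hr
  · rfl
  · exact (card_filter_classIdx_bias_eq_zero T Ψ _ (not_lt.1 hr)).symm

lemma eq_clausePtn_iff (j : Fin Ψ.m) (c : Ptn k ℓ) :
    c = clausePtn T Ψ j ↔ ∀ r, clausePtnPos T Ψ j r = c.cp r ∧ clausePtnNeg T Ψ j r = c.cm r := by
  constructor
  · rintro rfl r
    exact ⟨(clausePtn_cp T Ψ j r).symm, (clausePtn_cm T Ψ j r).symm⟩
  · intro h
    apply Subtype.ext
    funext i
    obtain ⟨hpos, hneg⟩ := h i
    simp only [Ptn.cp, Ptn.cm, dif_pos i.isLt] at hpos hneg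
    exact Prod.ext (Fin.ext hpos.symm) (Fin.ext hneg.symm)

end ClausePattern

lemma patProb_eq_prod_range {k ℓ : ℕ} (p : ℕ → ℝ) (c : Ptn k ℓ) :
    patProb p c = ∏ r ∈ range (2 * ℓ + 1), pExt ℓ p r ^ c.cp r * (1 - pExt ℓ p r) ^ c.cm r := by
  rw [prod_range_two_mul_add_one, patProb]
  congr 1
  · norm_num [pExt, ← pow_add]
  · refine prod_congr rfl fun i hi => ?_
    obtain ⟨hi1, hiℓ⟩ := mem_Icc.1 hi
    have hplus : pExt ℓ p (ℓ + i) = p i := by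
      rw [pExt, if_neg (by omega), if_pos (by omega), Nat.add_sub_cancel_left]
    have hminus : pExt ℓ p (ℓ - i) = 1 - p i := by
      rw [pExt, if_neg (by omega), if_neg (by omega), Nat.sub_sub_self hiℓ]
    rw [hplus, hminus, sub_sub_cancel, pow_add, pow_add]
    ring

lemma patProb_mem_Icc {k ℓ : ℕ} {p : ℕ → ℝ}
    (hp : ∀ i, 1 ≤ i → i ≤ ℓ → p i ∈ Set.Icc (0 : ℝ) 1) (c : Ptn k ℓ) :
    patProb p c ∈ Set.Icc (0 : ℝ) 1 := by
  have hfactor : ∀ r ∈ range (2 * ℓ + 1),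
      0 ≤ pExt ℓ p r ^ c.cp r * (1 - pExt ℓ p r) ^ c.cm r ∧
        pExt ℓ p r ^ c.cp r * (1 - pExt ℓ p r) ^ c.cm r ≤ 1 := by
    intro r hr
    obtain ⟨h0, h1⟩ := pExt_mem_Icc hp (Nat.lt_succ_iff.1 (mem_range.1 hr))
    exact ⟨by positivity, mul_le_one₀ (pow_le_one₀ h0 h1) (by positivity)
      (pow_le_one₀ (by linarith) (by linarith))⟩
  rw [patProb_eq_prod_range]
  exact ⟨prod_nonneg fun r hr => (hfactor r hr).1,
    prod_le_one (fun r hr => (hfactor r hr).1) fun r hr => (hfactor r hr).2⟩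

section Oblivious

variable {k n ℓ : ℕ} (T : BiasPartition ℓ) {p : ℕ → ℝ} (Ψ : KAndInstance k n)

lemma oblValue_eq_sum_prodBernoulli_mul_val :
    oblValue T p Ψ = ∑ x, prodBernoulli (fun v => roundProb T p (Ψ.bias v)) x * Ψ.val x :=
  rfl

lemma prod_roundProb_eq_patProb_clausePtn (j : Fin Ψ.m) :
    (∏ v ∈ Ψ.pos j, roundProb T p (Ψ.bias v)) * ∏ v ∈ Ψ.neg j, (1 - roundProb T p (Ψ.bias v))
      = patProb p (clausePtn T Ψ j) := by
  simp only [roundProb, prod_comp_classIdx_bias T Ψ _ (pExt ℓ p),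
    prod_comp_classIdx_bias T Ψ _ fun r => 1 - pExt ℓ p r, patProb_eq_prod_range,
    clausePtn_cp, clausePtn_cm, ← prod_mul_distrib]
  rfl

lemma oblValue_eq_sum_patProb_mul_snap :
    oblValue T p Ψ = ∑ c : Ptn k ℓ, patProb p c * snap T Ψ c := by
  have hsnap (c : Ptn k ℓ) :
      snap T Ψ c = (∑ j, if c = clausePtn T Ψ j then Ψ.w j else 0) / ∑ j, Ψ.w j := by
    simp only [snap, eq_clausePtn_iff]
  simp only [oblValue_eq_sum_prodBernoulli_mul_val, Ψ.sum_prodBernoulli_mul_val,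
    prod_roundProb_eq_patProb_clausePtn, hsnap, mul_div_assoc', ← sum_div, mul_sum, mul_ite,
    mul_zero]
  rw [sum_comm]
  simp only [sum_ite_eq', mem_univ, if_true, mul_comm]

lemma roundProb_bias_mem_Icc (hp : ∀ i, 1 ≤ i → i ≤ ℓ → p i ∈ Set.Icc (0 : ℝ) 1) (v : Fin n) :
    roundProb T p (Ψ.bias v) ∈ Set.Icc (0 : ℝ) 1 :=
  pExt_mem_Icc hp (T.classIdx_le (Ψ.abs_bias_le_one v))

lemma oblValue_nonneg (hp : ∀ i, 1 ≤ i → i ≤ ℓ → p i ∈ Set.Icc (0 : ℝ) 1) : 0 ≤ oblValue T p Ψ := by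
  rw [oblValue_eq_sum_prodBernoulli_mul_val]
  exact sum_nonneg fun x _ =>
    mul_nonneg (prodBernoulli_nonneg (roundProb_bias_mem_Icc T Ψ hp) x) (Ψ.val_nonneg x)

lemma oblValue_le_optVal (hp : ∀ i, 1 ≤ i → i ≤ ℓ → p i ∈ Set.Icc (0 : ℝ) 1) :
    oblValue T p Ψ ≤ Ψ.optVal := by
  rw [oblValue_eq_sum_prodBernoulli_mul_val]
  exact sum_prodBernoulli_mul_le (roundProb_bias_mem_Icc T Ψ hp) Ψ.val_le_optVal

lemma mul_optVal_le_oblValue (hp : ∀ i, 1 ≤ i → i ≤ ℓ → p i ∈ Set.Icc (0 : ℝ) 1) {α : ℝ}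
    (hα : α ≤ oblRatio k ℓ T p) : α * Ψ.optVal ≤ oblValue T p Ψ := by
  have hbdd :
      BddBelow {r : ℝ | ∃ (n : ℕ) (Ψ : KAndInstance k n), r = oblValue T p Ψ / Ψ.optVal} :=
    ⟨0, by
      rintro _ ⟨n', Ψ', rfl⟩
      exact div_nonneg (oblValue_nonneg T Ψ' hp) Ψ'.optVal_pos.le⟩
  exact (le_div_iff₀ Ψ.optVal_pos).1 (hα.trans (csInf_le hbdd ⟨n, Ψ, rfl⟩))

end Oblivious

theorem snapshot_estimate_general (k ℓ : ℕ)
    (T : BiasPartition ℓ) (p : ℕ → ℝ)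
    (hp : ∀ i, 1 ≤ i → i ≤ ℓ → p i ∈ Set.Icc (0 : ℝ) 1)
    (α : ℝ) (hα : α ≤ oblRatio k ℓ T p)
    {n : ℕ} (Ψ : KAndInstance k n) (Mhat : Ptn k ℓ → ℝ) (ε : ℝ)
    (hM : ∑ c : Ptn k ℓ, |snap T Ψ c - Mhat c| ≤ ε) :
    (α - 2 ^ (k + 1) * ε) * Ψ.optVal ≤ (∑ c : Ptn k ℓ, patProb p c * Mhat c) - ε ∧
    (∑ c : Ptn k ℓ, patProb p c * Mhat c) - ε ≤ Ψ.optVal := by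
  have hclose : |oblValue T p Ψ - ∑ c, patProb p c * Mhat c| ≤ ε := by
    rw [oblValue_eq_sum_patProb_mul_snap]
    exact (abs_sum_mul_sub_sum_mul_le univ fun c _ => patProb_mem_Icc hp c).trans hM
  have hε : 0 ≤ ε := (abs_nonneg _).trans hclose
  have herror : 2 * ε ≤ 2 ^ (k + 1) * ε * Ψ.optVal :=
    calc 2 * ε = 2 ^ (k + 1) * ε * (1 / 2) ^ k := by
          rw [pow_succ, div_pow, one_pow]; field_simp
      _ ≤ 2 ^ (k + 1) * ε * Ψ.optVal := by gcongr; exact Ψ.half_pow_le_optVal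
  have hlower := mul_optVal_le_oblValue T Ψ hp hα
  have hupper := oblValue_le_optVal T Ψ hp
  rw [abs_le] at hclose
  constructor <;> linarith

/-- **Estimating the value from an approximate snapshot.**  If the oblivious
algorithm `Obl_k^{t,p}` has approximation ratio at least `α`, and
`M̂ : Ptn_k^L → ℝ` satisfies `‖Snap_Ψ^t - M̂‖₁ ≤ ε`, then
`(α - 2^{k+1}ε)·val_Ψ ≤ ∑_c prob^p(c)·M̂(c) - ε ≤ val_Ψ`. -/
theorem snapshot_estimate (k ℓ : ℕ) (hk : 2 ≤ k) (hℓ : 1 ≤ ℓ)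
    (T : BiasPartition ℓ) (p : ℕ → ℝ)
    (hp : ∀ i, 1 ≤ i → i ≤ ℓ → p i ∈ Set.Icc (0 : ℝ) 1)
    (α : ℝ) (hα : α ≤ oblRatio k ℓ T p)
    {n : ℕ} (Ψ : KAndInstance k n) (Mhat : Ptn k ℓ → ℝ) (ε : ℝ)
    (hM : ∑ c : Ptn k ℓ, |snap T Ψ c - Mhat c| ≤ ε) :
    (α - 2 ^ (k + 1) * ε) * Ψ.optVal ≤ (∑ c : Ptn k ℓ, patProb p c * Mhat c) - ε ∧
    (∑ c : Ptn k ℓ, patProb p c * Mhat c) - ε ≤ Ψ.optVal :=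
  snapshot_estimate_general k ℓ T p hp α hα Ψ Mhat ε hM
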